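/- Let b, c : Fin 4 → ℤ and set y = Σ_{i=0}^{3} bᵢ·gⁱ(μ) + Σ_{i=0}^{3} cᵢ·gⁱ(ν) ∈ V. If at least two of the four A₄-copy components of y vanish (i.e. there exist j ≠ j' in Fin 4 with y j i = 0 and y j' i = 0 for all i ∈ Fin 4), then b = 0 and c = 0. -/

import Mathlib

noncomputable section

abbrev V : Type := Fin 4 → Fin 4 → ℚ

/-- The `A₄` Cartan matrix. -/
def CartanA4 : Matrix (Fin 4) (Fin 4) ℤ :=
  Matrix.of fun i k =>
    if i = k then 2 else if i.val + 1 = k.val ∨ k.val + 1 = i.val then -1 else 0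

/-- The bilinear form of the lattice `A₄(-2)^{⊕ 4}` on `V`. -/
def B (x y : V) : ℚ :=
  -2 * ∑ j : Fin 4, ∑ i : Fin 4, ∑ k : Fin 4, x j i * (CartanA4 i k : ℚ) * y j k

/-- The standard basis vector `a_{j,i}` (the `i`-th simple root of the `j`-th copy of `A₄`). -/
def a (j i : Fin 4) : V := fun j' i' => if j' = j ∧ i' = i then 1 else 0

/-- The subgroup `N ⊆ V` of integer-valued vectors, i.e. the lattice `A₄(-2)^{⊕ 4}`. -/
def N : AddSubgroup V :=
  AddSubgroup.pi Set.univ fun _ => AddSubgroup.pi Set.univ fun _ => (Int.castAddHom ℚ).range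

/-- The map acting as `γ : α₁ ↦ α₂ ↦ α₃ ↦ α₄ ↦ -(α₁+α₂+α₃+α₄)` on each copy of `A₄`. -/
def g (x : V) : V := fun j => ![-(x j 3), x j 0 - x j 3, x j 1 - x j 3, x j 2 - x j 3]

def μ : V := (1/2 : ℚ) • (a 0 0 + a 1 0 + a 2 0 + a 3 0)

def ν : V := (1/2 : ℚ) • (a 1 0 + a 2 2 + a 2 3 + a 3 0 + a 3 2 + a 3 3)

/-- The overlattice `L` generated by `N` and the vectors `gⁱ(μ)`, `gⁱ(ν)`, `i = 0,1,2,3`. -/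
def L : AddSubgroup V :=
  N ⊔ AddSubgroup.closure {x : V | ∃ i : Fin 4, x = g^[(i : ℕ)] μ ∨ x = g^[(i : ℕ)] ν}

def e : Fin 8 → V :=
  ![μ, g^[2] μ + g^[3] μ, ν, μ + g^[2] μ + g^[3] μ - g^[2] ν - g^[3] ν,
    a 0 0, a 0 2 + a 0 3, a 1 0, a 1 2 + a 1 3]

def f : Fin 8 → V := fun i => g (e i)

/-- The involution `h`, acting on each copy of `A₄` by `a₁ ↦ -a₁`, `a₂ ↦ a₁+a₂+a₃+a₄`,
`a₃ ↦ -a₄`, `a₄ ↦ -a₃`. -/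
def h (x : V) : V := fun j => ![x j 1 - x j 0, x j 1, x j 1 - x j 3, x j 1 - x j 2]

lemma vv0 : ((0 : Fin 4) : ℕ) = 0 := rfl
lemma vv1 : ((1 : Fin 4) : ℕ) = 1 := rfl
lemma vv2 : ((2 : Fin 4) : ℕ) = 2 := rfl
lemma vv3 : ((3 : Fin 4) : ℕ) = 3 := rfl

lemma gmu0 : g^[(0:ℕ)] μ = fun _ => ![1/2,0,0,0] := by
  funext j i
  fin_cases j <;> fin_cases i <;>
    norm_num [g, μ, a, Function.iterate_succ, Function.iterate_zero, Fin.ext_iff, vv2, vv3]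

lemma gnu0 : g^[(0:ℕ)] ν = ![![0,0,0,0],![1/2,0,0,0],![0,0,1/2,1/2],![1/2,0,1/2,1/2]] := by
  funext j i
  fin_cases j <;> fin_cases i <;>
    norm_num [g, ν, a, Function.iterate_succ, Function.iterate_zero, Fin.ext_iff, vv2, vv3]

lemma gmu1 : g^[(1:ℕ)] μ = fun _ => ![0,1/2,0,0] := by
  funext j i
  fin_cases j <;> fin_cases i <;>
    norm_num [g, μ, a, Function.iterate_succ, Function.iterate_zero, Fin.ext_iff, vv2, vv3]

lemma gnu1 : g^[(1:ℕ)] ν = ![![0,0,0,0],![0,1/2,0,0],![-1/2,-1/2,-1/2,0],![-1/2,0,-1/2,0]] := by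
  funext j i
  fin_cases j <;> fin_cases i <;>
    norm_num [g, ν, a, Function.iterate_succ, Function.iterate_zero, Fin.ext_iff, vv2, vv3]

lemma gmu2 : g^[(2:ℕ)] μ = fun _ => ![0,0,1/2,0] := by
  funext j i
  fin_cases j <;> fin_cases i <;>
    norm_num [g, μ, a, Function.iterate_succ, Function.iterate_zero, Fin.ext_iff, vv2, vv3, Matrix.cons_val_three, Matrix.cons_val_two, Matrix.tail_cons, Matrix.head_cons]

lemma gnu2 : g^[(2:ℕ)] ν = ![![0,0,0,0],![0,0,1/2,0],![0,-1/2,-1/2,-1/2],![0,-1/2,0,-1/2]] := by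
  funext j i
  fin_cases j <;> fin_cases i <;>
    norm_num [g, ν, a, Function.iterate_succ, Function.iterate_zero, Fin.ext_iff, vv2, vv3, Matrix.cons_val_three, Matrix.cons_val_two, Matrix.tail_cons, Matrix.head_cons]

lemma gmu3 : g^[(3:ℕ)] μ = fun _ => ![0,0,0,1/2] := by
  funext j i
  fin_cases j <;> fin_cases i <;>
    norm_num [g, μ, a, Function.iterate_succ, Function.iterate_zero, Fin.ext_iff, vv2, vv3, Matrix.cons_val_three, Matrix.cons_val_two, Matrix.tail_cons, Matrix.head_cons]

lemma gnu3 : g^[(3:ℕ)] ν = ![![0,0,0,0],![0,0,0,1/2],![1/2,1/2,0,0],![1/2,1/2,0,1/2]] := by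
  funext j i
  fin_cases j <;> fin_cases i <;>
    norm_num [g, ν, a, Function.iterate_succ, Function.iterate_zero, Fin.ext_iff, vv2, vv3, Matrix.cons_val_three, Matrix.cons_val_two, Matrix.tail_cons, Matrix.head_cons]

lemma mk0 (h : 0 < 4) : (⟨0, h⟩ : Fin 4) = 0 := rfl
lemma mk1 (h : 1 < 4) : (⟨1, h⟩ : Fin 4) = 1 := rfl
lemma mk2 (h : 2 < 4) : (⟨2, h⟩ : Fin 4) = 2 := rfl
lemma mk3 (h : 3 < 4) : (⟨3, h⟩ : Fin 4) = 3 := rfl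

lemma fin4_eq_zero (b : Fin 4 → ℤ) (h0 : (b 0 : ℚ) = 0) (h1 : (b 1 : ℚ) = 0)
    (h2 : (b 2 : ℚ) = 0) (h3 : (b 3 : ℚ) = 0) : b = 0 := by
  have e0 : b 0 = 0 := by exact_mod_cast h0
  have e1 : b 1 = 0 := by exact_mod_cast h1
  have e2 : b 2 = 0 := by exact_mod_cast h2
  have e3 : b 3 = 0 := by exact_mod_cast h3
  funext k
  fin_cases k <;> assumption

set_option maxHeartbeats 1000000 in
/-- If `y = Σ bᵢ gⁱ(μ) + Σ cᵢ gⁱ(ν)` has at least two of its four `A₄`-copy components equal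
to zero, then `b = 0` and `c = 0`. -/
theorem stmt5 (b c : Fin 4 → ℤ) (y : V)
    (hy : y = (∑ i : Fin 4, (b i : ℚ) • g^[(i : ℕ)] μ) +
      ∑ i : Fin 4, (c i : ℚ) • g^[(i : ℕ)] ν)
    (hvanish : ∃ j j' : Fin 4, j ≠ j' ∧ (∀ i, y j i = 0) ∧ (∀ i, y j' i = 0)) :
    b = 0 ∧ c = 0 := by
  obtain ⟨j, j', hne, h1, h2⟩ := hvanish
  have hT : (∑ i : Fin 4, (b i : ℚ) • g^[(i : ℕ)] μ) +
      ∑ i : Fin 4, (c i : ℚ) • g^[(i : ℕ)] ν =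
      ![![(b 0 : ℚ)/2, (b 1 : ℚ)/2, (b 2 : ℚ)/2, (b 3 : ℚ)/2],
        ![((b 0 : ℚ) + c 0)/2, ((b 1 : ℚ) + c 1)/2, ((b 2 : ℚ) + c 2)/2, ((b 3 : ℚ) + c 3)/2],
        ![((b 0 : ℚ) - c 1 + c 3)/2, ((b 1 : ℚ) - c 1 - c 2 + c 3)/2,
          ((b 2 : ℚ) + c 0 - c 1 - c 2)/2, ((b 3 : ℚ) + c 0 - c 2)/2],
        ![((b 0 : ℚ) + c 0 - c 1 + c 3)/2, ((b 1 : ℚ) - c 2 + c 3)/2,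
          ((b 2 : ℚ) + c 0 - c 1)/2, ((b 3 : ℚ) + c 0 - c 2 + c 3)/2]] := by
    funext j i
    simp only [Fin.sum_univ_four, vv0, vv1, vv2, vv3, gmu0, gmu1, gmu2, gmu3,
      gnu0, gnu1, gnu2, gnu3, Pi.add_apply, Pi.smul_apply, smul_eq_mul]
    fin_cases j <;> fin_cases i <;>
      simp only [mk0, mk1, mk2, mk3, Matrix.cons_val_zero, Matrix.cons_val_one,
        Matrix.head_cons, Matrix.cons_val_two, Matrix.tail_cons, Matrix.cons_val_three] <;>
      ring
  rw [hy, hT] at h1 h2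
  have p0 := h1 0; have p1 := h1 1; have p2 := h1 2; have p3 := h1 3
  have q0 := h2 0; have q1 := h2 1; have q2 := h2 2; have q3 := h2 3
  clear h1 h2
  fin_cases j <;> fin_cases j' <;>
    first
      | exact absurd rfl hne
      | (simp only [mk0, mk1, mk2, mk3, Matrix.cons_val_zero, Matrix.cons_val_one,
          Matrix.head_cons, Matrix.cons_val_two, Matrix.tail_cons, Matrix.cons_val_three]
          at p0 p1 p2 p3 q0 q1 q2 q3
         exact ⟨fin4_eq_zero b (by linarith) (by linarith) (by linarith) (by linarith),
           fin4_eq_zero c (by linarith) (by linarith) (by linarith) (by linarith)⟩)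
end
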